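/- arXiv:math/0702863 — 3 statements merged into one kernel-verified Lean document; each statement's English description precedes it below -/
import Mathlib

section
/- Let q have a double zero at α, i.e. q'/q = -2/x + 2/(1-x) + 2/(x-α) near α (with α ≠ 0, 1). Define q̲ = q + (1/4)(q'/q)² - (1/2)(q'/q)'. Then lim_{x→α} (x-α)² q̲(x) = 2 = -(1-3²)/4. -/
/-!
Near `α` write `q'/q = r + 2/(x - α)` with `r = -2/x + 2/(1 - x)` holomorphic at `α`.
For a logarithmic derivative `p = r + c/(x - α)` with a simple pole of residue `c`,
`(x - α)² (p²/4 - p'/2) = ((x - α) r + c)²/4 - ((x - α)² r' - c)/2` tends to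
`c²/4 + c/2 = ((c + 1)² - 1)/4`, while `(x - α)² q → 0` since `q` vanishes at `α`.
For `c = 2` the limit is `2`.
-/

open Filter Topology

lemma deriv_eq_deriv_sub_div_sq_of_eventuallyEq {p r : ℂ → ℂ} {α c x : ℂ} (hx : x ≠ α)
    (hr : DifferentiableAt ℂ r x) (hp : p =ᶠ[𝓝 x] fun y => r y + c / (y - α)) :
    deriv p x = deriv r x - c / (x - α) ^ 2 := by
  have hpole : HasDerivAt (fun y => c / (y - α)) (-(c / (x - α) ^ 2)) x := by
    have := (((hasDerivAt_id x).sub_const α).inv (sub_ne_zero.mpr hx)).const_mul c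
    simpa [div_eq_mul_inv, mul_neg] using this
  rw [hp.deriv_eq, (hr.hasDerivAt.fun_add hpole).deriv]
  ring

lemma tendsto_sq_mul_schwarzian_term_of_simple_pole {p r : ℂ → ℂ} {α c : ℂ}
    (hr : AnalyticAt ℂ r α) (hp : ∀ᶠ x in 𝓝[≠] α, p x = r x + c / (x - α)) :
    Tendsto (fun x => (x - α) ^ 2 * ((1 / 4) * p x ^ 2 - (1 / 2) * deriv p x)) (𝓝[≠] α)
      (𝓝 (((c + 1) ^ 2 - 1) / 4)) := by
  have hp_nhds : ∀ᶠ x in 𝓝[≠] α, p =ᶠ[𝓝 x] fun y => r y + c / (y - α) := by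
    filter_upwards [eventually_eventually_nhdsWithin.mpr hp, self_mem_nhdsWithin]
      with x hx hxα
    rwa [isOpen_compl_singleton.nhdsWithin_eq hxα] at hx
  have hlim : Tendsto (fun x => ((x - α) * r x + c) ^ 2 / 4 - ((x - α) ^ 2 * deriv r x - c) / 2)
      (𝓝[≠] α) (𝓝 (((c + 1) ^ 2 - 1) / 4)) := by
    have hcont : ContinuousAt
        (fun x => ((x - α) * r x + c) ^ 2 / 4 - ((x - α) ^ 2 * deriv r x - c) / 2) α := by
      have := hr.continuousAt
      have := hr.deriv.continuousAt
      fun_prop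
    convert hcont.tendsto.mono_left nhdsWithin_le_nhds using 2
    ring
  refine hlim.congr' ?_
  filter_upwards [hp, hp_nhds, self_mem_nhdsWithin,
    eventually_nhdsWithin_of_eventually_nhds hr.eventually_analyticAt] with x hpx hpx_nhds hxα hrx
  have hxα' : x - α ≠ 0 := sub_ne_zero.mpr hxα
  rw [hpx, deriv_eq_deriv_sub_div_sq_of_eventuallyEq hxα hrx.differentiableAt hpx_nhds]
  field_simp

/-- If q has a double zero at α, i.e. q'/q = -2/x + 2/(1-x) + 2/(x-α)
near α (α ≠ 0,1), and q̲ = q + (1/4)(q'/q)² - (1/2)(q'/q)', then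
lim_{x→α} (x-α)² q̲(x) = 2 = -(1-3²)/4. -/
theorem stmt7 (q : ℂ → ℂ) (α : ℂ) (hα0 : α ≠ 0) (hα1 : α ≠ 1)
    (hlog : ∀ x : ℂ, x ≠ 0 → x ≠ 1 → x ≠ α →
      deriv q x / q x = -2/x + 2/(1-x) + 2/(x-α))
    (hzero : Filter.Tendsto q (nhdsWithin α {α}ᶜ) (nhds 0)) :
    Filter.Tendsto
      (fun x : ℂ => (x-α)^2 *
        (q x + (1/4) * (deriv q x / q x)^2
          - (1/2) * deriv (fun y => deriv q y / q y) x))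
      (nhdsWithin α {α}ᶜ) (nhds 2)
    ∧ (2 : ℂ) = -(1 - 3^2)/4 := by
  refine ⟨?_, by norm_num⟩
  have hr : AnalyticAt ℂ (fun x : ℂ => -2/x + 2/(1-x)) α := by
    fun_prop (disch := first | exact hα0 | exact sub_ne_zero.mpr hα1.symm)
  have hpole : ∀ᶠ x in 𝓝[≠] α, deriv q x / q x = (-2/x + 2/(1-x)) + 2/(x-α) := by
    filter_upwards [eventually_nhdsWithin_of_eventually_nhds (eventually_ne_nhds hα0),
      eventually_nhdsWithin_of_eventually_nhds (eventually_ne_nhds hα1), self_mem_nhdsWithin]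
      with x hx0 hx1 hxα using hlog x hx0 hx1 hxα
  have hq : Tendsto (fun x => (x - α) ^ 2 * q x) (𝓝[≠] α) (𝓝 0) := by
    have hsq : Tendsto (fun x : ℂ => (x - α) ^ 2) (𝓝[≠] α) (𝓝 0) := by
      have : ContinuousAt (fun x : ℂ => (x - α) ^ 2) α := by fun_prop
      simpa using this.tendsto.mono_left nhdsWithin_le_nhds
    simpa using hsq.mul hzero
  have hlim := hq.add (tendsto_sq_mul_schwarzian_term_of_simple_pole hr hpole)
  norm_num at hlim
  exact hlim.congr fun x => by ring
end

section
/- Let g(z) = (az+b)/(cz+d) with ad-bc = 1, and let x be holomorphic with x(g(z)) = x(z) and ẍ(z) ≠ 0. Define f(z) = z + 2ẋ(z)/ẍ(z). Then f(g(z)) = g(f(z)), i.e., f is covariant under g. -/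
/-!
Differentiating the invariance `x ∘ g = x` gives `ẋ(g z) = (cz+d)² ẋ(z)`, and differentiating
once more gives `ẍ(g z) = (cz+d)⁴ ẍ(z) + 2c(cz+d)³ ẋ(z)`. Substituting these into `f (g z)`, both
`f (g z)` and `g (f z)` become `((az+b) ẍ(z) + 2a ẋ(z)) / ((cz+d) ẍ(z) + 2c ẋ(z))`.
-/

open Filter Topology

section Mobius

variable {𝕜 : Type*} [NontriviallyNormedField 𝕜] {a b c d w : 𝕜}

theorem hasDerivAt_mobius (hw : c * w + d ≠ 0) :
    HasDerivAt (fun z => (a * z + b) / (c * z + d)) ((a * d - b * c) / (c * w + d) ^ 2) w := by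
  have hnum : HasDerivAt (fun z => a * z + b) a w := by
    simpa using ((hasDerivAt_id w).const_mul a).add_const b
  have hden : HasDerivAt (fun z => c * z + d) c w := by
    simpa using ((hasDerivAt_id w).const_mul c).add_const d
  refine (hnum.div hden hw).congr_deriv ?_
  ring

theorem deriv_comp_mobius_of_transform {k : ℕ} {y : 𝕜 → 𝕜} (h : a * d - b * c = 1)
    (hy : Differentiable 𝕜 y)
    (hk : ∀ z, c * z + d ≠ 0 → y ((a * z + b) / (c * z + d)) = (c * z + d) ^ k * y z)
    (hw : c * w + d ≠ 0) :
    deriv y ((a * w + b) / (c * w + d))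
      = (c * w + d) ^ (k + 2) * deriv y w + k * c * (c * w + d) ^ (k + 1) * y w := by
  have hdom : IsOpen {z : 𝕜 | c * z + d ≠ 0} :=
    isOpen_ne_fun (by fun_prop) continuous_const
  have hcomp : HasDerivAt (fun z => y ((a * z + b) / (c * z + d)))
      (deriv y ((a * w + b) / (c * w + d)) * (1 / (c * w + d) ^ 2)) w := by
    have hg := hasDerivAt_mobius (a := a) (b := b) hw
    rw [h] at hg
    exact (hy _).hasDerivAt.comp w hg
  have hfactor : HasDerivAt (fun z => (c * z + d) ^ k * y z)
      (k * (c * w + d) ^ (k - 1) * c * y w + (c * w + d) ^ k * deriv y w) w := by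
    have hlin : HasDerivAt (fun z => c * z + d) c w := by
      simpa using ((hasDerivAt_id w).const_mul c).add_const d
    exact (hlin.pow k).mul (hy w).hasDerivAt
  have hloc : (fun z => y ((a * z + b) / (c * z + d))) =ᶠ[𝓝 w]
      fun z => (c * z + d) ^ k * y z :=
    eventually_of_mem (hdom.mem_nhds hw) hk
  have heq := hloc.deriv_eq
  rw [hcomp.deriv, hfactor.deriv, mul_one_div, div_eq_iff (pow_ne_zero 2 hw)] at heq
  rw [heq]
  rcases k with _ | k
  · simp [mul_comm]
  · push_cast
    ring

theorem mobius_add_two_mul_div {z u v : 𝕜} (h : a * d - b * c = 1) (hz : c * z + d ≠ 0)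
    (hv : v ≠ 0) (hzv : (c * z + d) * v + 2 * c * u ≠ 0) :
    (a * z + b) / (c * z + d)
        + 2 * ((c * z + d) ^ 2 * u) / ((c * z + d) ^ 4 * v + 2 * c * (c * z + d) ^ 3 * u)
      = (a * (z + 2 * u / v) + b) / (c * (z + 2 * u / v) + d) := by
  have hden : (c * z + d) ^ 4 * v + 2 * c * (c * z + d) ^ 3 * u
      = (c * z + d) ^ 3 * ((c * z + d) * v + 2 * c * u) := by ring
  have hden' : c * (z + 2 * u / v) + d = ((c * z + d) * v + 2 * c * u) / v := by
    field_simp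
    ring
  rw [hden, hden', div_add_div _ _ hz (mul_ne_zero (pow_ne_zero 3 hz) hzv),
    div_eq_div_iff (mul_ne_zero hz (mul_ne_zero (pow_ne_zero 3 hz) hzv)) (div_ne_zero hzv hv)]
  field_simp
  linear_combination (-(2 * u * (c * z + d) ^ 3 * ((c * z + d) * v + 2 * c * u))) * h

end Mobius

/-- If x is holomorphic, invariant under g(z) = (az+b)/(cz+d)
(ad-bc = 1), with ẍ nonvanishing, then f(z) = z + 2ẋ(z)/ẍ(z) is covariant:
f(g(z)) = g(f(z)). -/
theorem stmt12 (a b c d : ℂ) (h : a*d - b*c = 1) (x : ℂ → ℂ)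
    (hx : Differentiable ℂ x)
    (hx'' : ∀ z : ℂ, deriv (deriv x) z ≠ 0)
    (hinv : ∀ z : ℂ, c*z + d ≠ 0 → x ((a*z+b)/(c*z+d)) = x z)
    (f : ℂ → ℂ) (hf : ∀ z : ℂ, f z = z + 2 * deriv x z / deriv (deriv x) z) :
    ∀ z : ℂ, c*z + d ≠ 0 →
      f ((a*z+b)/(c*z+d)) = (a * f z + b) / (c * f z + d) := by
  have hdx : ∀ z, c * z + d ≠ 0 →
      deriv x ((a * z + b) / (c * z + d)) = (c * z + d) ^ 2 * deriv x z :=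
    fun z hz => by
      simpa using deriv_comp_mobius_of_transform (k := 0) h hx (by simpa using hinv) hz
  have hddx : ∀ z, c * z + d ≠ 0 → deriv (deriv x) ((a * z + b) / (c * z + d))
      = (c * z + d) ^ 4 * deriv (deriv x) z + 2 * c * (c * z + d) ^ 3 * deriv x z :=
    fun z hz => by simpa using deriv_comp_mobius_of_transform (k := 2) h hx.deriv hdx hz
  intro z hz
  have hzv : (c * z + d) * deriv (deriv x) z + 2 * c * deriv x z ≠ 0 := by
    intro h0
    apply hx'' ((a * z + b) / (c * z + d))
    rw [hddx z hz]
    linear_combination (c * z + d) ^ 3 * h0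
  rw [hf, hf, hdx z hz, hddx z hz]
  exact mobius_add_two_mul_div h hz (hx'' z) hzv
end

section
/- Let z = S(x) be a locally biholomorphic map with inverse x(z), and let v = i√(ẋ), u = vz (so that u, v solve the SL-equation u'' - qu = 0 with q = -{S;x}, and uv' - u'v = ±1). Then u'(x)/v'(x) = z + 2ẋ/ẍ, where derivatives ' are with respect to x and dots with respect to z. -/
/-- Let z = S(x) be locally biholomorphic with inverse x(z),
v = i√(ẋ), u = vz. Then u'(x)/v'(x) = z + 2ẋ/ẍ (primes w.r.t. x, dots w.r.t. z). -/
theorem stmt13 (S X r : ℂ → ℂ) (x₀ : ℂ)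
    (hS : DifferentiableAt ℂ S x₀)
    (hX : DifferentiableAt ℂ X (S x₀))
    (hX' : DifferentiableAt ℂ (deriv X) (S x₀))
    (hr : DifferentiableAt ℂ r (S x₀))
    (hr2 : ∀ᶠ z in nhds (S x₀), (r z)^2 = deriv X z)
    (hinv : ∀ᶠ x in nhds x₀, X (S x) = x)
    (hS' : deriv S x₀ ≠ 0)
    (hr0 : r (S x₀) ≠ 0)
    (hX'' : deriv (deriv X) (S x₀) ≠ 0)
    (v u : ℂ → ℂ)
    (hv : ∀ z, v z = Complex.I * r z)
    (hu : ∀ z, u z = v z * z) :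
    deriv (fun x => u (S x)) x₀ / deriv (fun x => v (S x)) x₀
      = S x₀ + 2 * deriv X (S x₀) / deriv (deriv X) (S x₀) := by
  set z₀ := S x₀ with hz₀
  -- derivative of r² equals X''
  have hd2 : deriv (fun z => (r z)^2) z₀ = deriv (deriv X) z₀ :=
    Filter.EventuallyEq.deriv_eq hr2
  have hpow : HasDerivAt (fun z => (r z)^2)
      ((2 : ℕ) * (r z₀)^(2-1) * deriv r z₀) z₀ := hr.hasDerivAt.pow 2
  have hrr' : 2 * r z₀ * deriv r z₀ = deriv (deriv X) z₀ := by
    have := hpow.deriv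
    rw [hd2] at this
    rw [this]; norm_num
  have hr' : deriv r z₀ ≠ 0 := by
    intro h
    apply hX''
    rw [← hrr', h]; ring
  -- derivatives of u and v
  have hvfun : v = fun z => Complex.I * r z := funext hv
  have hufun : u = fun z => (Complex.I * r z) * z := by
    funext z; rw [hu, hv]
  have hdv : HasDerivAt v (Complex.I * deriv r z₀) z₀ := by
    rw [hvfun]
    exact (hr.hasDerivAt.const_mul Complex.I)
  have hdu : HasDerivAt u (Complex.I * deriv r z₀ * z₀ + Complex.I * r z₀ * 1) z₀ := by
    rw [hufun]
    exact (hr.hasDerivAt.const_mul Complex.I).mul (hasDerivAt_id z₀)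
  have hdS : HasDerivAt S (deriv S x₀) x₀ := hS.hasDerivAt
  have hcu : deriv (fun x => u (S x)) x₀
      = (Complex.I * deriv r z₀ * z₀ + Complex.I * r z₀ * 1) * deriv S x₀ :=
    (hdu.comp x₀ hdS).deriv
  have hcv : deriv (fun x => v (S x)) x₀
      = (Complex.I * deriv r z₀) * deriv S x₀ :=
    (hdv.comp x₀ hdS).deriv
  have hX'v : deriv X z₀ = (r z₀)^2 := (hr2.self_of_nhds).symm
  rw [hcu, hcv, hX'v, ← hrr']
  have hI : Complex.I ≠ 0 := Complex.I_ne_zero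
  field_simp
end
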